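/- arXiv:2312.16762 — 3 statements merged into one kernel-verified Lean document; each statement's English description precedes it below -/
import Mathlib

section
/- Let ω : [0,1] → ℝ be continuous with ‖ω‖_∞ ≤ W and let k : T → ℝ be continuous with ‖k‖_∞ ≤ K, where T = {(x,ξ) : 0 ≤ ξ ≤ x ≤ 1}. If κ : T → ℝ is continuous and satisfies κ(x,ξ) = ω(x) k(x,ξ) + ∫_ξ^x κ(x,s) k(s,ξ) ds on T, then ‖κ‖_∞ ≤ W·K·e^K. -/
open MeasureTheory Real Set

theorem kappa_volterra_bound
    (ω : ℝ → ℝ) (k κ : ℝ → ℝ → ℝ) (W K : ℝ)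
    (hω : ContinuousOn ω (Icc 0 1))
    (hωW : ∀ x ∈ Icc (0:ℝ) 1, |ω x| ≤ W)
    (hk : ContinuousOn (fun p : ℝ × ℝ => k p.1 p.2)
      {p : ℝ × ℝ | 0 ≤ p.2 ∧ p.2 ≤ p.1 ∧ p.1 ≤ 1})
    (hkK : ∀ x ξ : ℝ, 0 ≤ ξ → ξ ≤ x → x ≤ 1 → |k x ξ| ≤ K)
    (hκ : ContinuousOn (fun p : ℝ × ℝ => κ p.1 p.2)
      {p : ℝ × ℝ | 0 ≤ p.2 ∧ p.2 ≤ p.1 ∧ p.1 ≤ 1})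
    (heq : ∀ x ξ : ℝ, 0 ≤ ξ → ξ ≤ x → x ≤ 1 →
      κ x ξ = ω x * k x ξ + ∫ s in ξ..x, κ x s * k s ξ) :
    ∀ x ξ : ℝ, 0 ≤ ξ → ξ ≤ x → x ≤ 1 → |κ x ξ| ≤ W * K * Real.exp K := by
  have hK0 : 0 ≤ K := (abs_nonneg _).trans (hkK 0 0 le_rfl le_rfl zero_le_one)
  have hW0 : 0 ≤ W := (abs_nonneg _).trans (hωW 0 ⟨le_rfl, zero_le_one⟩)
  intro x ξ hξ0 hξx hx1
  have hx0 : 0 ≤ x := hξ0.trans hξx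
  -- continuity of the slice s ↦ κ x s on [0, x]
  have hslice : ContinuousOn (fun s => κ x s) (Icc 0 x) := by
    have hmap : ContinuousOn (fun s : ℝ => ((x, s) : ℝ × ℝ)) (Icc 0 x) :=
      (continuous_const.prodMk continuous_id).continuousOn
    exact hκ.comp hmap (fun s hs => ⟨hs.1, hs.2, hx1⟩)
  obtain ⟨M0, hM0⟩ := (isCompact_Icc (a := (0:ℝ)) (b := x)).exists_bound_of_continuousOn hslice
  set M : ℝ := max M0 0 with hMdef
  have hM : ∀ s ∈ Icc (0:ℝ) x, |κ x s| ≤ M := fun s hs =>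
    ((hM0 s hs).trans (le_max_left _ _))
  have hMnn : 0 ≤ M := le_max_right _ _
  -- the iterated Grönwall bound
  have main : ∀ n : ℕ, ∀ η, 0 ≤ η → η ≤ x →
      |κ x η| ≤ W * K * (∑ j ∈ Finset.range n, K ^ j * (x - η) ^ j / j.factorial)
        + M * (K ^ n * (x - η) ^ n / n.factorial) := by
    intro n
    induction n with
    | zero =>
      intro η h0 hηx
      simpa using hM η ⟨h0, hηx⟩
    | succ n ih =>
      intro η h0 hηx
      have hη1 : η ≤ 1 := hηx.trans hx1
      have hsub : Icc η x ⊆ Icc 0 x := Icc_subset_Icc h0 le_rfl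
      have hκc : ContinuousOn (fun s => κ x s) (Icc η x) := hslice.mono hsub
      have hkc : ContinuousOn (fun s => k s η) (Icc η x) := by
        have hmap : ContinuousOn (fun s : ℝ => ((s, η) : ℝ × ℝ)) (Icc η x) :=
          (continuous_id.prodMk continuous_const).continuousOn
        exact hk.comp hmap (fun s hs => ⟨h0, hs.1, hs.2.trans hx1⟩)
      have hint1 : IntervalIntegrable (fun s => κ x s * k s η) volume η x := by
        apply ContinuousOn.intervalIntegrable
        rw [uIcc_of_le hηx]
        exact hκc.mul hkc
      have habs : IntervalIntegrable (fun s => |κ x s * k s η|) volume η x := hint1.abs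
      set g : ℝ → ℝ := fun s => K * (W * K *
          (∑ j ∈ Finset.range n, K ^ j * (x - s) ^ j / j.factorial)
        + M * (K ^ n * (x - s) ^ n / n.factorial)) with hg
      have hgcont : Continuous g := by
        apply continuous_const.mul
        apply Continuous.add
        · exact continuous_const.mul (continuous_finset_sum _ fun j _ =>
            (continuous_const.mul ((continuous_const.sub continuous_id).pow j)).div_const _)
        · exact continuous_const.mul
            ((continuous_const.mul ((continuous_const.sub continuous_id).pow n)).div_const _)
      have hgint : IntervalIntegrable g volume η x := hgcont.intervalIntegrable _ _
      have hpt : ∀ s ∈ Icc η x, |κ x s * k s η| ≤ g s := by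
        intro s hs
        rw [abs_mul]
        have h1 := ih s (h0.trans hs.1) hs.2
        have h2 : |k s η| ≤ K := hkK s η h0 hs.1 (hs.2.trans hx1)
        have hrhs : 0 ≤ W * K * (∑ j ∈ Finset.range n, K ^ j * (x - s) ^ j / j.factorial)
            + M * (K ^ n * (x - s) ^ n / n.factorial) := (abs_nonneg _).trans h1
        calc |κ x s| * |k s η|
            ≤ (W * K * (∑ j ∈ Finset.range n, K ^ j * (x - s) ^ j / j.factorial)
              + M * (K ^ n * (x - s) ^ n / n.factorial)) * K :=
              mul_le_mul h1 h2 (abs_nonneg _) hrhs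
          _ = g s := by simp only [hg]; ring
      have step : |κ x η| ≤ W * K + ∫ s in η..x, g s := by
        rw [heq x η h0 hηx hx1]
        calc |ω x * k x η + ∫ s in η..x, κ x s * k s η|
            ≤ |ω x * k x η| + |∫ s in η..x, κ x s * k s η| := abs_add_le _ _
          _ ≤ W * K + ∫ s in η..x, |κ x s * k s η| := by
              refine add_le_add ?_ (intervalIntegral.abs_integral_le_integral_abs hηx)
              rw [abs_mul]
              exact mul_le_mul (hωW x ⟨hx0, hx1⟩) (hkK x η h0 hηx hx1) (abs_nonneg _) hW0
          _ ≤ W * K + ∫ s in η..x, g s := by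
              gcongr
              exact intervalIntegral.integral_mono_on hηx habs hgint hpt
      -- compute the integral of g
      have hpow : ∀ m : ℕ, (∫ s in η..x, (x - s) ^ m) = (x - η) ^ (m + 1) / (m + 1) := by
        intro m
        have h := intervalIntegral.integral_comp_sub_left (a := η) (b := x)
          (fun s => s ^ m) x
        simp only [sub_self] at h
        rw [h, integral_pow]
        simp
      have hg_eq : ∀ s, g s
          = (∑ j ∈ Finset.range n, K * (W * K) * (K ^ j / j.factorial) * (x - s) ^ j)
            + K * M * (K ^ n / n.factorial) * (x - s) ^ n := by
        intro s
        simp only [hg, mul_add, Finset.mul_sum]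
        congr 1
        · exact Finset.sum_congr rfl fun j _ => by ring
        · ring
      have hterm_int : ∀ (c : ℝ) (m : ℕ),
          IntervalIntegrable (fun s => c * (x - s) ^ m) volume η x :=
        fun c m => (continuous_const.mul
          ((continuous_const.sub continuous_id).pow m)).intervalIntegrable _ _
      have hint_g : (∫ s in η..x, g s)
          = (∑ j ∈ Finset.range n,
              K * (W * K) * (K ^ j / j.factorial) * ((x - η) ^ (j + 1) / (j + 1)))
            + K * M * (K ^ n / n.factorial) * ((x - η) ^ (n + 1) / (n + 1)) := by
        rw [intervalIntegral.integral_congr (g := fun s =>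
          (∑ j ∈ Finset.range n, K * (W * K) * (K ^ j / j.factorial) * (x - s) ^ j)
            + K * M * (K ^ n / n.factorial) * (x - s) ^ n) (fun s _ => hg_eq s)]
        have hsumint : IntervalIntegrable (fun s =>
            ∑ j ∈ Finset.range n, K * (W * K) * (K ^ j / (j.factorial : ℝ)) * (x - s) ^ j)
            volume η x :=
          (continuous_finset_sum _ fun j _ => continuous_const.mul
            ((continuous_const.sub continuous_id).pow j)).intervalIntegrable _ _
        rw [intervalIntegral.integral_add hsumint (hterm_int _ n)]
        rw [intervalIntegral.integral_finset_sum (fun j _ => hterm_int _ j)]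
        congr 1
        · exact Finset.sum_congr rfl fun j _ => by
            rw [intervalIntegral.integral_const_mul, hpow j]
        · rw [intervalIntegral.integral_const_mul, hpow n]
      -- per-term simplification of the integral
      have hfac : ∀ m : ℕ, ((m + 1).factorial : ℝ) = (m + 1) * m.factorial := by
        intro m; push_cast [Nat.factorial_succ]; ring
      have hsum : ∀ j ∈ Finset.range n,
          K * (W * K) * (K ^ j / j.factorial) * ((x - η) ^ (j + 1) / (j + 1))
          = W * K * (K ^ (j + 1) * (x - η) ^ (j + 1) / ((j + 1).factorial : ℝ)) := by
        intro j _
        have h1 : (j.factorial : ℝ) ≠ 0 := Nat.cast_ne_zero.2 j.factorial_ne_zero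
        have h2 : ((j : ℝ) + 1) ≠ 0 := by positivity
        rw [hfac j]
        field_simp
        ring
      have hMterm : K * M * (K ^ n / n.factorial) * ((x - η) ^ (n + 1) / (n + 1))
          = M * (K ^ (n + 1) * (x - η) ^ (n + 1) / ((n + 1).factorial : ℝ)) := by
        have h1 : (n.factorial : ℝ) ≠ 0 := Nat.cast_ne_zero.2 n.factorial_ne_zero
        have h2 : ((n : ℝ) + 1) ≠ 0 := by positivity
        rw [hfac n]
        field_simp
        ring
      refine step.trans (le_of_eq ?_)
      rw [hint_g, Finset.sum_congr rfl hsum, hMterm,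
        Finset.sum_range_succ' (fun j => K ^ j * (x - η) ^ j / (j.factorial : ℝ)) n,
        mul_add, Finset.mul_sum]
      simp only [pow_zero, Nat.factorial_zero, Nat.cast_one, div_one, one_mul, mul_one]
      push_cast
      ring
  -- pass to the limit
  have final : ∀ n : ℕ, |κ x ξ| ≤ W * K * Real.exp K + M * (K ^ n / n.factorial) := by
    intro n
    refine (main n ξ hξ0 hξx).trans (add_le_add ?_ ?_)
    · have h1 : (∑ j ∈ Finset.range n, K ^ j * (x - ξ) ^ j / (j.factorial : ℝ))
          ≤ Real.exp K := by
        calc ∑ j ∈ Finset.range n, K ^ j * (x - ξ) ^ j / (j.factorial : ℝ)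
            = ∑ j ∈ Finset.range n, (K * (x - ξ)) ^ j / (j.factorial : ℝ) :=
              Finset.sum_congr rfl fun j _ => by rw [mul_pow]
          _ ≤ Real.exp (K * (x - ξ)) :=
              Real.sum_le_exp_of_nonneg (mul_nonneg hK0 (sub_nonneg.2 hξx)) n
          _ ≤ Real.exp K := Real.exp_le_exp.2 (by nlinarith)
      exact mul_le_mul_of_nonneg_left h1 (mul_nonneg hW0 hK0)
    · have h2 : (x - ξ) ^ n ≤ 1 := pow_le_one₀ (sub_nonneg.2 hξx) (by linarith)
      have h3 : K ^ n * (x - ξ) ^ n / n.factorial ≤ K ^ n / n.factorial := by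
        gcongr
        nlinarith [pow_nonneg hK0 n, pow_nonneg (sub_nonneg.2 hξx) n]
      exact mul_le_mul_of_nonneg_left h3 hMnn
  have hlim : Filter.Tendsto (fun n : ℕ => W * K * Real.exp K + M * (K ^ n / n.factorial))
      Filter.atTop (nhds (W * K * Real.exp K)) := by
    have h := (FloorSemiring.tendsto_pow_div_factorial_atTop (K := ℝ) K).const_mul M
    simpa using (tendsto_const_nhds (x := W * K * Real.exp K)
      (f := Filter.atTop (α := ℕ))).add h
  exact ge_of_tendsto' hlim final
end

section
/- Let u, β ∈ L²(0,1), let l₁, l₂ : T → ℝ be bounded measurable with ‖l₁‖_∞ ≤ L₁ and ‖l₂‖_∞ ≤ L₂, and define v(x) = β(x) + ∫_0^x l₁(x,ξ)u(ξ)dξ + ∫_0^x l₂(x,ξ)β(ξ)dξ. Then ‖u‖² + ‖v‖² ≤ (4 + 3L₁² + 3L₂²)(‖u‖² + ‖β‖²). -/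
/-!
Each Volterra term is controlled pointwise by Cauchy–Schwarz on `(0,1]`:
`(∫₀ˣ l(x,ξ) f(ξ) dξ)² ≤ L² (∫₀¹ |f|)² ≤ L² ‖f‖²`. Hence
`v(x)² ≤ 3β(x)² + 3L₁²‖u‖² + 3L₂²‖β‖²`, and integrating over `(0,1]` gives the claim.
-/

open MeasureTheory Real Set

section ProbabilityMeasure

variable {Ω : Type*} [MeasurableSpace Ω] {μ : Measure Ω}

lemma sq_integral_abs_le_integral_sq [IsProbabilityMeasure μ] {f : Ω → ℝ} (hf : MemLp f 2 μ) :
    (∫ x, |f x| ∂μ) ^ 2 ≤ ∫ x, f x ^ 2 ∂μ := by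
  have h := ProbabilityTheory.variance_eq_sub hf.abs ▸
    ProbabilityTheory.variance_nonneg (fun x => |f x|) μ
  simpa only [Pi.pow_apply, Pi.abs_apply, sq_abs, sub_nonneg] using h

lemma abs_integral_mul_le_mul_integral_abs {k f : Ω → ℝ} {L : ℝ} (hf : Integrable f μ)
    (hk : ∀ᵐ x ∂μ, |k x| ≤ L) :
    |∫ x, k x * f x ∂μ| ≤ L * ∫ x, |f x| ∂μ := by
  rw [← integral_const_mul, ← norm_eq_abs]
  refine norm_integral_le_of_norm_le (hf.abs.const_mul L) (hk.mono fun x hx => ?_)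
  rw [norm_mul, norm_eq_abs, norm_eq_abs]
  exact mul_le_mul_of_nonneg_right hx (abs_nonneg _)

lemma sq_integral_mul_le [IsProbabilityMeasure μ] {k f : Ω → ℝ} {L : ℝ} (hf : MemLp f 2 μ)
    (hk : ∀ᵐ x ∂μ, |k x| ≤ L) :
    (∫ x, k x * f x ∂μ) ^ 2 ≤ L ^ 2 * ∫ x, f x ^ 2 ∂μ := by
  have h := abs_integral_mul_le_mul_integral_abs (hf.integrable one_le_two) hk
  calc (∫ x, k x * f x ∂μ) ^ 2 = |∫ x, k x * f x ∂μ| ^ 2 := (sq_abs _).symm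
    _ ≤ (L * ∫ x, |f x| ∂μ) ^ 2 := pow_le_pow_left₀ (abs_nonneg _) h 2
    _ = L ^ 2 * (∫ x, |f x| ∂μ) ^ 2 := mul_pow _ _ _
    _ ≤ L ^ 2 * ∫ x, f x ^ 2 ∂μ :=
        mul_le_mul_of_nonneg_left (sq_integral_abs_le_integral_sq hf) (sq_nonneg L)

lemma integral_le_integral_add_const_of_le [IsProbabilityMeasure μ] {f g : Ω → ℝ} {c : ℝ}
    (hf : 0 ≤ᵐ[μ] f) (hg : Integrable g μ) (hfg : ∀ᵐ x ∂μ, f x ≤ g x + c) :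
    ∫ x, f x ∂μ ≤ ∫ x, g x ∂μ + c := by
  have h := integral_mono_of_nonneg (g := fun x => g x + c) hf
    (hg.add (integrable_const c)) hfg
  rwa [integral_add hg (integrable_const c), integral_const, probReal_univ, one_smul] at h

end ProbabilityMeasure

instance isProbabilityMeasure_restrict_Ioc_zero_one : IsProbabilityMeasure (volume.restrict (Ioc (0 : ℝ) 1)) :=
  ⟨by simp⟩

lemma sq_intervalIntegral_mul_le {k f : ℝ → ℝ} {L x : ℝ}
    (hf : MemLp f 2 (volume.restrict (Ioc (0 : ℝ) 1))) (hx : x ∈ Ioc (0 : ℝ) 1)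
    (hk : ∀ ξ ∈ Ioc 0 x, |k ξ| ≤ L) :
    (∫ ξ in (0 : ℝ)..x, k ξ * f ξ) ^ 2 ≤ L ^ 2 * ∫ ξ in Ioc (0 : ℝ) 1, f ξ ^ 2 := by
  have hL : 0 ≤ L := (abs_nonneg _).trans (hk x ⟨hx.1, le_rfl⟩)
  have hrestrict : ∫ ξ in (0 : ℝ)..x, k ξ * f ξ =
      ∫ ξ in Ioc (0 : ℝ) 1, (Ioc 0 x).indicator k ξ * f ξ := by
    simp_rw [← indicator_mul_left, intervalIntegral.integral_of_le hx.1.le,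
      setIntegral_indicator measurableSet_Ioc,
      inter_eq_right.2 (Ioc_subset_Ioc_right hx.2)]
  rw [hrestrict]
  refine sq_integral_mul_le hf (ae_of_all _ fun ξ => ?_)
  by_cases hξ : ξ ∈ Ioc 0 x
  · simpa [indicator_of_mem hξ] using hk ξ hξ
  · simpa [indicator_of_notMem hξ] using hL

theorem backstepping_norm_equiv_inverse_general
    (u β : ℝ → ℝ) (l₁ l₂ : ℝ → ℝ → ℝ) (L₁ L₂ : ℝ)
    (hu : MemLp u 2 (volume.restrict (Ioc (0:ℝ) 1)))
    (hβ : MemLp β 2 (volume.restrict (Ioc (0:ℝ) 1)))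
    (hl₁ : ∀ x ξ : ℝ, 0 ≤ ξ → ξ ≤ x → x ≤ 1 → |l₁ x ξ| ≤ L₁)
    (hl₂ : ∀ x ξ : ℝ, 0 ≤ ξ → ξ ≤ x → x ≤ 1 → |l₂ x ξ| ≤ L₂)
    (v : ℝ → ℝ)
    (hv : ∀ x ∈ Icc (0:ℝ) 1,
      v x = β x + (∫ ξ in (0:ℝ)..x, l₁ x ξ * u ξ) + ∫ ξ in (0:ℝ)..x, l₂ x ξ * β ξ) :
    (∫ x in (0:ℝ)..1, (u x) ^ 2) + (∫ x in (0:ℝ)..1, (v x) ^ 2) ≤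
      (4 + 3 * L₁ ^ 2 + 3 * L₂ ^ 2) *
        ((∫ x in (0:ℝ)..1, (u x) ^ 2) + ∫ x in (0:ℝ)..1, (β x) ^ 2) := by
  simp only [intervalIntegral.integral_of_le zero_le_one]
  set A := ∫ x in Ioc (0:ℝ) 1, u x ^ 2
  set B := ∫ x in Ioc (0:ℝ) 1, β x ^ 2
  have hpoint : ∀ x ∈ Ioc (0:ℝ) 1, v x ^ 2 ≤ 3 * β x ^ 2 + 3 * (L₁ ^ 2 * A + L₂ ^ 2 * B) := by
    intro x hx
    have h₁ := sq_intervalIntegral_mul_le hu hx fun ξ hξ => hl₁ x ξ hξ.1.le hξ.2 hx.2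
    have h₂ := sq_intervalIntegral_mul_le hβ hx fun ξ hξ => hl₂ x ξ hξ.1.le hξ.2 hx.2
    rw [hv x (Ioc_subset_Icc_self hx)]
    nlinarith [sq_nonneg (β x - ∫ ξ in (0:ℝ)..x, l₁ x ξ * u ξ),
      sq_nonneg (β x - ∫ ξ in (0:ℝ)..x, l₂ x ξ * β ξ),
      sq_nonneg ((∫ ξ in (0:ℝ)..x, l₁ x ξ * u ξ) - ∫ ξ in (0:ℝ)..x, l₂ x ξ * β ξ)]
  have hv_sq : ∫ x in Ioc (0:ℝ) 1, v x ^ 2 ≤ 3 * B + 3 * (L₁ ^ 2 * A + L₂ ^ 2 * B) := by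
    have h := integral_le_integral_add_const_of_le (ae_of_all _ fun x => sq_nonneg (v x))
      (hβ.integrable_sq.const_mul 3) ((ae_restrict_iff' measurableSet_Ioc).2 (ae_of_all _ hpoint))
    rwa [integral_const_mul] at h
  have hA : 0 ≤ A := integral_nonneg fun x => sq_nonneg (u x)
  have hB : 0 ≤ B := integral_nonneg fun x => sq_nonneg (β x)
  nlinarith [mul_nonneg (sq_nonneg L₁) hB, mul_nonneg (sq_nonneg L₂) hA]

theorem backstepping_norm_equiv_inverse
    (u β : ℝ → ℝ) (l₁ l₂ : ℝ → ℝ → ℝ) (L₁ L₂ : ℝ)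
    (hu : MemLp u 2 (volume.restrict (Ioc (0:ℝ) 1)))
    (hβ : MemLp β 2 (volume.restrict (Ioc (0:ℝ) 1)))
    (hl₁m : Measurable (fun p : ℝ × ℝ => l₁ p.1 p.2))
    (hl₂m : Measurable (fun p : ℝ × ℝ => l₂ p.1 p.2))
    (hl₁ : ∀ x ξ : ℝ, 0 ≤ ξ → ξ ≤ x → x ≤ 1 → |l₁ x ξ| ≤ L₁)
    (hl₂ : ∀ x ξ : ℝ, 0 ≤ ξ → ξ ≤ x → x ≤ 1 → |l₂ x ξ| ≤ L₂)
    (v : ℝ → ℝ)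
    (hv : ∀ x ∈ Icc (0:ℝ) 1,
      v x = β x + (∫ ξ in (0:ℝ)..x, l₁ x ξ * u ξ) + ∫ ξ in (0:ℝ)..x, l₂ x ξ * β ξ) :
    (∫ x in (0:ℝ)..1, (u x) ^ 2) + (∫ x in (0:ℝ)..1, (v x) ^ 2) ≤
      (4 + 3 * L₁ ^ 2 + 3 * L₂ ^ 2) *
        ((∫ x in (0:ℝ)..1, (u x) ^ 2) + ∫ x in (0:ℝ)..1, (β x) ^ 2) :=
  backstepping_norm_equiv_inverse_general u β l₁ l₂ L₁ L₂ hu hβ hl₁ hl₂ v hv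
end

section
/- Let k, k̃ : T → ℝ be bounded on T = {(x,ξ) : 0 ≤ ξ ≤ x ≤ 1} with ‖k̃‖_∞ ≤ ε, and let l, l̂ be continuous solutions on T of l(x,ξ) = k(x,ξ) + ∫_ξ^x k(x,s)l(s,ξ)ds and l̂(x,ξ) = (k+k̃)(x,ξ) + ∫_ξ^x (k+k̃)(x,s)l̂(s,ξ)ds respectively, with ‖k‖_∞ ≤ K. Then ‖l − l̂‖_∞ ≤ ε(1 + (K+ε)e^{K+ε}) e^{K}. -/
/-!
Subtracting the two equations gives
`|l - l̂|(x, ξ) ≤ ε + ε ‖l̂‖_∞ + K ∫_ξ^x |l - l̂|(s, ξ) ds`, where `‖l̂‖_∞ ≤ (K + ε) e^(K + ε)` by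
Grönwall's inequality applied to the equation of `l̂` alone; Grönwall in `x` then gives the bound.

The kernels are only assumed bounded, not measurable, so the integrability of
`s ↦ k(x, s) l(s, ξ)` needed to subtract the equations has to be read off the equation itself.
The set `S` of those `η` for which `s ↦ k(x, s) l(s, η)` is measurable is closed, and on `S` the
integral `J(η) = ∫_η^x k(x, s) l(s, η) ds` is continuous by dominated convergence, while off `S`
it is `0` by convention. Hence `k(x, ·) = l(x, ·) - 1_S J` is measurable.
-/

open MeasureTheory Real Set Filter Topology

theorem aestronglyMeasurable_mul_of_tendsto {α : Type*} [MeasurableSpace α] {μ : Measure α}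
    {m w : α → ℝ} {v : ℕ → α → ℝ}
    (hmv : ∀ n, AEStronglyMeasurable (fun a => m a * v n a) μ) (hv : ∀ n, AEMeasurable (v n) μ)
    (hw : AEMeasurable w μ) (hlim : ∀ᵐ a ∂μ, Tendsto (fun n => v n a) atTop (𝓝 (w a))) :
    AEStronglyMeasurable (fun a => m a * w a) μ := by
  -- `m * w = (m * vₙ) * (w / vₙ)` as soon as `vₙ ≠ 0`, and both sides vanish where `w = 0`
  refine aestronglyMeasurable_of_tendsto_ae atTop
    (f := fun n a => m a * v n a * (w a / v n a))
    (fun n => (hmv n).mul (hw.div (hv n)).aestronglyMeasurable) ?_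
  filter_upwards [hlim] with a ha
  by_cases hwa : w a = 0
  · simp [hwa]
  refine tendsto_const_nhds.congr' ?_
  filter_upwards [ha.eventually_ne hwa] with n hn
  field_simp

theorem le_mul_exp_of_le_add_mul_integral {f : ℝ → ℝ} {a b A C : ℝ} (hC : 0 ≤ C)
    (hf : ContinuousOn f (Icc a b)) (hle : ∀ y ∈ Icc a b, f y ≤ A + C * ∫ s in a..y, f s) :
    ∀ y ∈ Icc a b, f y ≤ A * exp (C * (y - a)) := by
  intro y hy
  have hab : a ≤ b := hy.1.trans hy.2
  -- extend `f` continuously to `ℝ` so that its primitive is differentiable everywhere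
  set F : ℝ → ℝ := fun t => f (projIcc a b hab t)
  have hF : Continuous F :=
    hf.comp_continuous (continuous_subtype_val.comp continuous_projIcc) fun t =>
      (projIcc a b hab t).2
  have hFf : ∀ t ∈ Icc a b, F t = f t := fun t ht => by simp [F, projIcc_of_mem hab ht]
  have hint : ∀ t ∈ Icc a b, ∫ s in a..t, F s = ∫ s in a..t, f s := fun t ht =>
    intervalIntegral.integral_congr fun s hs => by
      rw [uIcc_of_le ht.1] at hs
      exact hFf s ⟨hs.1, hs.2.trans ht.2⟩
  set h : ℝ → ℝ := fun t => exp (-(C * (t - a))) * (A + C * ∫ s in a..t, F s)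
  have hderiv : ∀ t,
      HasDerivAt h (C * exp (-(C * (t - a))) * (F t - (A + C * ∫ s in a..t, F s))) t := by
    intro t
    have h1 : HasDerivAt (fun t => -(C * (t - a))) (-(C * 1)) t :=
      (((hasDerivAt_id t).sub_const a).const_mul C).neg
    have h2 := ((hF.integral_hasStrictDerivAt a t).hasDerivAt.const_mul C).const_add A
    exact (h1.exp.mul h2).congr_deriv (by ring)
  have hanti : AntitoneOn h (Icc a b) := by
    refine antitoneOn_of_deriv_nonpos (convex_Icc a b)
      (fun t _ => (hderiv t).continuousAt.continuousWithinAt)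
      (fun t _ => (hderiv t).differentiableAt.differentiableWithinAt) fun t ht => ?_
    rw [interior_Icc] at ht
    rw [(hderiv t).deriv]
    have ht' : t ∈ Icc a b := Ioo_subset_Icc_self ht
    have := hle t ht'
    rw [← hint t ht', ← hFf t ht'] at this
    have : 0 ≤ C * exp (-(C * (t - a))) := by positivity
    nlinarith
  have hya : h y ≤ h a := hanti ⟨le_rfl, hab⟩ hy hy.1
  simp only [h, sub_self, mul_zero, neg_zero, exp_zero, intervalIntegral.integral_same, one_mul,
    add_zero] at hya
  calc f y ≤ A + C * ∫ s in a..y, f s := hle y hy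
    _ = exp (C * (y - a)) * h y := by
        simp only [h, hint y hy, ← mul_assoc, ← exp_add, add_neg_cancel, exp_zero, one_mul]
    _ ≤ exp (C * (y - a)) * A := by gcongr
    _ = A * exp (C * (y - a)) := mul_comm _ _

namespace Volterra

def triangle : Set (ℝ × ℝ) := {p | 0 ≤ p.2 ∧ p.2 ≤ p.1 ∧ p.1 ≤ 1}

theorem isCompact_triangle : IsCompact triangle := by
  refine (isCompact_Icc (a := ((0 : ℝ), (0 : ℝ))) (b := (1, 1))).of_isClosed_subset ?_ ?_
  · exact (isClosed_le continuous_const continuous_snd).inter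
      ((isClosed_le continuous_snd continuous_fst).inter
        (isClosed_le continuous_fst continuous_const))
  · rintro ⟨x, ξ⟩ ⟨h0, hξx, hx1⟩
    exact ⟨⟨h0.trans hξx, h0⟩, hx1, hξx.trans hx1⟩

variable {u : ℝ → ℝ → ℝ}

theorem continuousOn_column (hu : ContinuousOn (fun p : ℝ × ℝ => u p.1 p.2) triangle) {ξ : ℝ}
    (hξ : 0 ≤ ξ) : ContinuousOn (fun y => u y ξ) (Icc ξ 1) :=
  hu.comp (continuous_id.prodMk continuous_const).continuousOn fun _ hy => ⟨hξ, hy.1, hy.2⟩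

theorem continuousOn_row (hu : ContinuousOn (fun p : ℝ × ℝ => u p.1 p.2) triangle) {x : ℝ}
    (hx : x ≤ 1) : ContinuousOn (fun s => u x s) (Icc 0 x) :=
  hu.comp (continuous_const.prodMk continuous_id).continuousOn fun _ hs => ⟨hs.1, hs.2, hx⟩

section Row

variable {m : ℝ → ℝ} {x : ℝ}

def measurableIntegrandSet (m : ℝ → ℝ) (u : ℝ → ℝ → ℝ) (x : ℝ) : Set ℝ :=
  {η ∈ Icc 0 x | AEStronglyMeasurable (fun s => m s * u s η) (volume.restrict (Ioc η x))}

theorem isClosed_measurableIntegrandSet (hu : ContinuousOn (fun p : ℝ × ℝ => u p.1 p.2) triangle)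
    (hx : x ≤ 1) : IsClosed (measurableIntegrandSet m u x) := by
  refine IsSeqClosed.isClosed fun {η} {η₀} hη hlim => ?_
  have hη₀ : η₀ ∈ Icc 0 x :=
    isClosed_Icc.mem_of_tendsto hlim (Eventually.of_forall fun n => (hη n).1)
  refine ⟨hη₀, ?_⟩
  set μ := volume.restrict (Ioc η₀ x)
  have hcol : ∀ {ξ}, ξ ∈ Icc 0 x → AEMeasurable (fun s => u s ξ) (volume.restrict (Ioc ξ x)) :=
    fun hξ => ((continuousOn_column hu hξ.1).mono fun _ hs => ⟨hs.1.le, hs.2.trans hx⟩).aemeasurable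
      measurableSet_Ioc
  have hrestrict : ∀ ξ, μ.restrict (Ioc ξ x) ≤ volume.restrict (Ioc ξ x) :=
    fun _ => Measure.restrict_mono subset_rfl Measure.restrict_le_self
  refine aestronglyMeasurable_mul_of_tendsto
    (v := fun n => (Ioc (η n) x).indicator fun s => u s (η n))
    (fun n => ?_) (fun n => ?_) (hcol hη₀) ?_
  · simp_rw [← indicator_mul_right]
    exact (aestronglyMeasurable_indicator_iff measurableSet_Ioc).2
      ((hη n).2.mono_measure (hrestrict _))
  · exact (aemeasurable_indicator_iff measurableSet_Ioc).2
      ((hcol (hη n).1).mono_measure (hrestrict _))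
  · refine ae_restrict_of_forall_mem measurableSet_Ioc fun s hs => ?_
    have hnear : ∀ᶠ n in atTop, η n < s := hlim.eventually_lt_const hs.1
    have hu_s : Tendsto (fun n => u s (η n)) atTop (𝓝 (u s η₀)) := by
      refine (hu (s, η₀) ⟨hη₀.1, hs.1.le, hs.2.trans hx⟩).tendsto.comp
        (tendsto_nhdsWithin_iff.2 ⟨tendsto_const_nhds.prodMk_nhds hlim, ?_⟩)
      filter_upwards [hnear] with n hn
      exact ⟨(hη n).1.1, hn.le, hs.2.trans hx⟩
    refine hu_s.congr' ?_
    filter_upwards [hnear] with n hn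
    simp only [indicator_of_mem (show s ∈ Ioc (η n) x from ⟨hn, hs.2⟩)]

theorem continuousOn_integral_measurableIntegrandSet
    (hu : ContinuousOn (fun p : ℝ × ℝ => u p.1 p.2) triangle) (hx : x ≤ 1) {Km : ℝ}
    (hm : ∀ s ∈ Icc 0 x, |m s| ≤ Km) :
    ContinuousOn (fun η => ∫ s in η..x, m s * u s η) (measurableIntegrandSet m u x) := by
  intro η₀ hη₀
  have hx0 : 0 ≤ x := hη₀.1.1.trans hη₀.1.2
  obtain ⟨C, hC⟩ := isCompact_triangle.exists_bound_of_continuousOn hu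
  -- integrate over the fixed interval `[0, x]` so that dominated convergence applies
  set F : ℝ → ℝ → ℝ := fun η => (Ioc η x).indicator fun s => m s * u s η
  have hJ : ∀ η ∈ Icc 0 x, ∫ s in η..x, m s * u s η = ∫ s in 0..x, F η s := fun η hη => by
    rw [intervalIntegral.integral_of_le hη.2, intervalIntegral.integral_of_le hx0,
      setIntegral_indicator measurableSet_Ioc, Ioc_inter_Ioc, max_eq_right hη.1, min_self]
  refine ContinuousWithinAt.congr ?_ (fun η hη => hJ η hη.1) (hJ η₀ hη₀.1)
  refine intervalIntegral.continuousWithinAt_of_dominated_interval (bound := fun _ => Km * C)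
    ?_ ?_ intervalIntegrable_const ?_
  · refine eventually_nhdsWithin_of_forall fun η hη => ?_
    exact (aestronglyMeasurable_indicator_iff measurableSet_Ioc).2
      (hη.2.mono_measure (Measure.restrict_mono subset_rfl Measure.restrict_le_self))
  · refine eventually_nhdsWithin_of_forall fun η hη => ae_of_all _ fun s _ => ?_
    rw [norm_indicator_eq_indicator_norm]
    have hKm : 0 ≤ Km := (abs_nonneg _).trans (hm 0 ⟨le_rfl, hx0⟩)
    have hC0 : 0 ≤ C := (norm_nonneg _).trans (hC (0, 0) ⟨le_rfl, le_rfl, zero_le_one⟩)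
    refine indicator_apply_le' (fun hs => ?_) fun _ => mul_nonneg hKm hC0
    rw [norm_mul]
    exact mul_le_mul (hm s ⟨hη.1.1.trans hs.1.le, hs.2⟩)
      (hC (s, η) ⟨hη.1.1, hs.1.le, hs.2.trans hx⟩) (norm_nonneg _) hKm
  · filter_upwards [volume.ae_ne η₀] with s hsη₀ hs
    rw [uIoc_of_le hx0] at hs
    rcases hsη₀.lt_or_gt with hlt | hgt
    · refine continuousWithinAt_const.congr_of_eventuallyEq ?_ (indicator_of_notMem ?_ _)
      · filter_upwards [nhdsWithin_le_nhds (Ioi_mem_nhds hlt)] with η hη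
        exact indicator_of_notMem (fun h => (h.1.trans hη).false) _
      · exact fun h => h.1.not_gt hlt
    · rw [← continuousWithinAt_inter (Iio_mem_nhds hgt)]
      have hu_s : ContinuousWithinAt (fun η => u s η) (measurableIntegrandSet m u x ∩ Iio s) η₀ :=
        (hu (s, η₀) ⟨hη₀.1.1, hgt.le, hs.2.trans hx⟩).comp
          (continuous_const.prodMk continuous_id).continuousWithinAt
          fun η hη => ⟨hη.1.1.1, le_of_lt hη.2, hs.2.trans hx⟩
      exact (continuousWithinAt_const.mul hu_s).congr
        (fun η hη => indicator_of_mem (show s ∈ Ioc η x from ⟨hη.2, hs.2⟩) _)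
        (indicator_of_mem (show s ∈ Ioc η₀ x from ⟨hgt, hs.2⟩) _)

variable {Km : ℝ}

theorem aestronglyMeasurable_of_eq_add_integral
    (hu : ContinuousOn (fun p : ℝ × ℝ => u p.1 p.2) triangle) (hx : x ≤ 1)
    (hm : ∀ s ∈ Icc 0 x, |m s| ≤ Km)
    (hrow : ∀ s ∈ Icc 0 x, u x s = m s + ∫ r in s..x, m r * u r s) :
    AEStronglyMeasurable m (volume.restrict (Icc 0 x)) := by
  set S := measurableIntegrandSet m u x
  have hS : MeasurableSet S := (isClosed_measurableIntegrandSet hu hx).measurableSet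
  -- off `S` the integral in the equation is `0` by convention
  have hrepr : ∀ s ∈ Icc 0 x, u x s - S.indicator (fun η => ∫ r in η..x, m r * u r η) s = m s := by
    intro s hs
    by_cases hsS : s ∈ S
    · rw [indicator_of_mem hsS, hrow s hs]
      ring
    · have hnot : ¬ IntervalIntegrable (fun r => m r * u r s) volume s x := fun hint =>
        hsS ⟨hs, ((intervalIntegrable_iff_integrableOn_Ioc_of_le hs.2).1 hint).aestronglyMeasurable⟩
      rw [indicator_of_notMem hsS, hrow s hs, intervalIntegral.integral_undef hnot]
      ring
  refine AEStronglyMeasurable.congr ?_ (ae_restrict_of_forall_mem measurableSet_Icc hrepr)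
  refine (((continuousOn_row hu hx).aemeasurable measurableSet_Icc).sub ?_).aestronglyMeasurable
  exact (aemeasurable_indicator_iff hS).2
    (((continuousOn_integral_measurableIntegrandSet hu hx hm).aemeasurable hS).mono_measure
      (Measure.restrict_mono subset_rfl Measure.restrict_le_self))

theorem intervalIntegrable_of_eq_add_integral
    (hu : ContinuousOn (fun p : ℝ × ℝ => u p.1 p.2) triangle) (hx : x ≤ 1)
    (hm : ∀ s ∈ Icc 0 x, |m s| ≤ Km)
    (hrow : ∀ s ∈ Icc 0 x, u x s = m s + ∫ r in s..x, m r * u r s) {η : ℝ} (hη : η ∈ Icc 0 x) :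
    IntervalIntegrable (fun s => m s * u s η) volume η x := by
  obtain ⟨C, hC⟩ := isCompact_triangle.exists_bound_of_continuousOn hu
  have hKm : 0 ≤ Km := (abs_nonneg _).trans (hm η hη)
  have hsub : Ioc η x ⊆ Icc 0 x := fun s hs => ⟨hη.1.trans hs.1.le, hs.2⟩
  rw [intervalIntegrable_iff_integrableOn_Ioc_of_le hη.2]
  refine Integrable.mono' (g := fun _ => Km * C) (integrableOn_const measure_Ioc_lt_top.ne) ?_ ?_
  · exact ((aestronglyMeasurable_of_eq_add_integral hu hx hm hrow).mono_measure
      (Measure.restrict_mono hsub le_rfl)).mul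
      (((continuousOn_column hu hη.1).mono fun s hs =>
        ⟨hs.1.le, hs.2.trans hx⟩).aestronglyMeasurable measurableSet_Ioc)
  · refine ae_restrict_of_forall_mem measurableSet_Ioc fun s hs => ?_
    rw [norm_mul, Real.norm_eq_abs]
    exact mul_le_mul (hm s (hsub hs)) (hC (s, η) ⟨hη.1, hs.1.le, hs.2.trans hx⟩) (norm_nonneg _) hKm

end Row

theorem abs_le_mul_exp_of_abs_le_add_mul_integral {φ : ℝ → ℝ} {ξ A K : ℝ} (hξ : 0 ≤ ξ)
    (hA : 0 ≤ A) (hK : 0 ≤ K) (hφ : ContinuousOn φ (Icc ξ 1))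
    (hle : ∀ y ∈ Icc ξ 1, |φ y| ≤ A + K * ∫ s in ξ..y, |φ s|) {y : ℝ} (hy : y ∈ Icc ξ 1) :
    |φ y| ≤ A * exp K :=
  (le_mul_exp_of_le_add_mul_integral hK hφ.abs hle y hy).trans <|
    mul_le_mul_of_nonneg_left (exp_le_exp.2 (by nlinarith [hy.2])) hA

def IsResolvent (κ u : ℝ → ℝ → ℝ) : Prop :=
  ∀ x ξ : ℝ, 0 ≤ ξ → ξ ≤ x → x ≤ 1 → u x ξ = κ x ξ + ∫ s in ξ..x, κ x s * u s ξ

variable {κ : ℝ → ℝ → ℝ} {K : ℝ}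

theorem IsResolvent.intervalIntegrable (hsol : IsResolvent κ u)
    (hκ : ∀ x ξ : ℝ, 0 ≤ ξ → ξ ≤ x → x ≤ 1 → |κ x ξ| ≤ K)
    (hu : ContinuousOn (fun p : ℝ × ℝ => u p.1 p.2) triangle) {x ξ : ℝ} (hξ : 0 ≤ ξ)
    (hξx : ξ ≤ x) (hx : x ≤ 1) : IntervalIntegrable (fun s => κ x s * u s ξ) volume ξ x :=
  intervalIntegrable_of_eq_add_integral hu hx (fun s hs => hκ x s hs.1 hs.2 hx)
    (fun s hs => hsol x s hs.1 hs.2 hx) ⟨hξ, hξx⟩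

theorem IsResolvent.abs_le (hsol : IsResolvent κ u)
    (hκ : ∀ x ξ : ℝ, 0 ≤ ξ → ξ ≤ x → x ≤ 1 → |κ x ξ| ≤ K)
    (hu : ContinuousOn (fun p : ℝ × ℝ => u p.1 p.2) triangle) {x ξ : ℝ} (hξ : 0 ≤ ξ)
    (hξx : ξ ≤ x) (hx : x ≤ 1) : |u x ξ| ≤ K * exp K := by
  have hK : 0 ≤ K := (abs_nonneg _).trans (hκ 0 0 le_rfl le_rfl zero_le_one)
  refine abs_le_mul_exp_of_abs_le_add_mul_integral hξ hK hK (continuousOn_column hu hξ)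
    (fun y hy => ?_) ⟨hξx, hx⟩
  have hint : IntervalIntegrable (fun s => K * |u s ξ|) volume ξ y :=
    (((continuousOn_column hu hξ).mono (Icc_subset_Icc le_rfl hy.2)).abs.const_mul K
      ).intervalIntegrable_of_Icc hy.1
  have hpt : ∀ s ∈ Ioc ξ y, ‖κ y s * u s ξ‖ ≤ K * |u s ξ| := fun s hs => by
    rw [norm_mul, Real.norm_eq_abs, Real.norm_eq_abs]
    exact mul_le_mul_of_nonneg_right (hκ y s (hξ.trans hs.1.le) hs.2 hy.2) (abs_nonneg _)
  calc |u y ξ| = |κ y ξ + ∫ s in ξ..y, κ y s * u s ξ| := by rw [← hsol y ξ hξ hy.1 hy.2]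
    _ ≤ |κ y ξ| + ‖∫ s in ξ..y, κ y s * u s ξ‖ := abs_add_le _ _
    _ ≤ K + ∫ s in ξ..y, K * |u s ξ| :=
        add_le_add (hκ y ξ hξ hy.1 hy.2)
          (intervalIntegral.norm_integral_le_of_norm_le hy.1 (ae_of_all _ hpt) hint)
    _ = K + K * ∫ s in ξ..y, |u s ξ| := by rw [intervalIntegral.integral_const_mul]

theorem IsResolvent.abs_sub_le_add_mul_integral {κ' v : ℝ → ℝ → ℝ} {ε : ℝ}
    (hu_sol : IsResolvent κ u) (hv_sol : IsResolvent (fun x ξ => κ x ξ + κ' x ξ) v)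
    (hκ : ∀ x ξ : ℝ, 0 ≤ ξ → ξ ≤ x → x ≤ 1 → |κ x ξ| ≤ K)
    (hκ' : ∀ x ξ : ℝ, 0 ≤ ξ → ξ ≤ x → x ≤ 1 → |κ' x ξ| ≤ ε)
    (hu : ContinuousOn (fun p : ℝ × ℝ => u p.1 p.2) triangle)
    (hv : ContinuousOn (fun p : ℝ × ℝ => v p.1 p.2) triangle) {ξ y : ℝ} (hξ : 0 ≤ ξ)
    (hy : y ∈ Icc ξ 1) :
    |u y ξ - v y ξ| ≤ ε * (1 + (K + ε) * exp (K + ε)) + K * ∫ s in ξ..y, |u s ξ - v s ξ| := by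
  have hε : 0 ≤ ε := (abs_nonneg _).trans (hκ' 0 0 le_rfl le_rfl zero_le_one)
  have hκκ' : ∀ x ξ : ℝ, 0 ≤ ξ → ξ ≤ x → x ≤ 1 → |κ x ξ + κ' x ξ| ≤ K + ε :=
    fun x ξ h0 hξx hx => (abs_add_le _ _).trans (add_le_add (hκ x ξ h0 hξx hx) (hκ' x ξ h0 hξx hx))
  set M := (K + ε) * exp (K + ε)
  have hvM : ∀ s ∈ Icc ξ 1, |v s ξ| ≤ M := fun s hs => hv_sol.abs_le hκκ' hv hξ hs.1 hs.2
  have hM : 0 ≤ M := (abs_nonneg _).trans (hvM ξ ⟨le_rfl, hy.1.trans hy.2⟩)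
  have hdiff : u y ξ - v y ξ
      = -κ' y ξ + ∫ s in ξ..y, (κ y s * u s ξ - (κ y s + κ' y s) * v s ξ) := by
    rw [intervalIntegral.integral_sub (hu_sol.intervalIntegrable hκ hu hξ hy.1 hy.2)
      (hv_sol.intervalIntegrable hκκ' hv hξ hy.1 hy.2), hu_sol y ξ hξ hy.1 hy.2,
      hv_sol y ξ hξ hy.1 hy.2]
    ring
  have hpt : ∀ s ∈ Ioc ξ y,
      ‖κ y s * u s ξ - (κ y s + κ' y s) * v s ξ‖ ≤ K * |u s ξ - v s ξ| + ε * M := by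
    intro s hs
    have hs0 : 0 ≤ s := hξ.trans hs.1.le
    calc ‖κ y s * u s ξ - (κ y s + κ' y s) * v s ξ‖
        = |κ y s * (u s ξ - v s ξ) - κ' y s * v s ξ| := by rw [Real.norm_eq_abs]; ring_nf
      _ ≤ |κ y s| * |u s ξ - v s ξ| + |κ' y s| * |v s ξ| := by
          rw [← abs_mul, ← abs_mul]; exact abs_sub _ _
      _ ≤ K * |u s ξ - v s ξ| + ε * M := by
          gcongr
          · exact hκ y s hs0 hs.2 hy.2
          · exact hκ' y s hs0 hs.2 hy.2
          · exact hvM s ⟨hs.1.le, hs.2.trans hy.2⟩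
  have hint : IntervalIntegrable (fun s => |u s ξ - v s ξ|) volume ξ y :=
    (((continuousOn_column hu hξ).sub (continuousOn_column hv hξ)).abs.mono
      (Icc_subset_Icc le_rfl hy.2)).intervalIntegrable_of_Icc hy.1
  calc |u y ξ - v y ξ|
      ≤ |κ' y ξ| + ‖∫ s in ξ..y, (κ y s * u s ξ - (κ y s + κ' y s) * v s ξ)‖ := by
        rw [hdiff, ← abs_neg (κ' y ξ)]; exact abs_add_le _ _
    _ ≤ ε + ∫ s in ξ..y, (K * |u s ξ - v s ξ| + ε * M) :=
        add_le_add (hκ' y ξ hξ hy.1 hy.2) (intervalIntegral.norm_integral_le_of_norm_le hy.1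
          (ae_of_all _ hpt) ((hint.const_mul K).add intervalIntegrable_const))
    _ = ε + ε * M * (y - ξ) + K * ∫ s in ξ..y, |u s ξ - v s ξ| := by
        rw [intervalIntegral.integral_add (hint.const_mul K) intervalIntegrable_const,
          intervalIntegral.integral_const_mul, intervalIntegral.integral_const, smul_eq_mul]
        ring
    _ ≤ ε * (1 + M) + K * ∫ s in ξ..y, |u s ξ - v s ξ| := by
        have : ε * M * (y - ξ) ≤ ε * M :=
          mul_le_of_le_one_right (by positivity) (by linarith [hy.2])
        linarith

end Volterra

theorem resolvent_perturbation_stability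
    (k ktil l lhat : ℝ → ℝ → ℝ) (ε K : ℝ)
    (hktil : ∀ x ξ : ℝ, 0 ≤ ξ → ξ ≤ x → x ≤ 1 → |ktil x ξ| ≤ ε)
    (hk : ∀ x ξ : ℝ, 0 ≤ ξ → ξ ≤ x → x ≤ 1 → |k x ξ| ≤ K)
    (hl : ContinuousOn (fun p : ℝ × ℝ => l p.1 p.2)
      {p : ℝ × ℝ | 0 ≤ p.2 ∧ p.2 ≤ p.1 ∧ p.1 ≤ 1})
    (hlhat : ContinuousOn (fun p : ℝ × ℝ => lhat p.1 p.2)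
      {p : ℝ × ℝ | 0 ≤ p.2 ∧ p.2 ≤ p.1 ∧ p.1 ≤ 1})
    (heql : ∀ x ξ : ℝ, 0 ≤ ξ → ξ ≤ x → x ≤ 1 →
      l x ξ = k x ξ + ∫ s in ξ..x, k x s * l s ξ)
    (heqlhat : ∀ x ξ : ℝ, 0 ≤ ξ → ξ ≤ x → x ≤ 1 →
      lhat x ξ = (k x ξ + ktil x ξ) + ∫ s in ξ..x, (k x s + ktil x s) * lhat s ξ) :
    ∀ x ξ : ℝ, 0 ≤ ξ → ξ ≤ x → x ≤ 1 →
      |l x ξ - lhat x ξ| ≤ ε * (1 + (K + ε) * Real.exp (K + ε)) * Real.exp K := by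
  intro x ξ hξ hξx hx
  have hε : 0 ≤ ε := (abs_nonneg _).trans (hktil 0 0 le_rfl le_rfl zero_le_one)
  have hK : 0 ≤ K := (abs_nonneg _).trans (hk 0 0 le_rfl le_rfl zero_le_one)
  exact Volterra.abs_le_mul_exp_of_abs_le_add_mul_integral hξ (by positivity) hK
    ((Volterra.continuousOn_column hl hξ).sub (Volterra.continuousOn_column hlhat hξ))
    (fun y hy =>
      Volterra.IsResolvent.abs_sub_le_add_mul_integral heql heqlhat hk hktil hl hlhat hξ hy)
    ⟨hξx, hx⟩
end
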